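/- A CNF formula Δ is unsatisfiable (no model M satisfies M ⊨ Δ) if and only if the sequent ∅ ⊢ Δ (with the empty valuation) is derivable in the DPLL proof system. -/

import Mathlib

/-- A literal: a propositional variable (ℕ) with a sign. -/
structure Lit where
  var : ℕ
  sign : Bool
deriving DecidableEq

/-- The opposite literal. -/
def Lit.neg (l : Lit) : Lit := ⟨l.var, !l.sign⟩

/-- A clause: a finite set of literals, read disjunctively. -/
abbrev Clause := Finset Lit

/-- A CNF formula: a finite set of clauses, read conjunctively. -/
abbrev CNF := Finset Clause

/-- A valuation: a finite set of literals, read conjunctively. -/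
abbrev Valu := Finset Lit

/-- A model: a boolean assignment to literals respecting negation. -/
def IsModel (M : Lit → Bool) : Prop := ∀ l : Lit, M l = true ↔ ¬ (M (Lit.neg l) = true)

/-- `M ⊨ Γ` for a valuation (set of literals) `Γ`. -/
def SatVal (M : Lit → Bool) (Γ : Valu) : Prop := ∀ l ∈ Γ, M l = true

/-- `M ⊨ Δ` for a CNF formula `Δ`. -/
def SatCNF (M : Lit → Bool) (Δ : CNF) : Prop := ∀ C ∈ Δ, ∃ l ∈ C, M l = true

/-- A consistent valuation. -/
def Consistent (Γ : Valu) : Prop := ∀ l ∈ Γ, Lit.neg l ∉ Γ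

/-- The DPLL derivability relation `Γ ⊢ Δ`. -/
inductive DPLL : Valu → CNF → Prop
  | conflict (Γ : Valu) (Δ : CNF) : (∅ : Clause) ∈ Δ → DPLL Γ Δ
  | unit (Γ : Valu) (Δ : CNF) (l : Lit) : ({l} : Clause) ∈ Δ →
      DPLL (insert l Γ) (Δ.erase {l}) → DPLL Γ Δ
  | elim (Γ : Valu) (Δ : CNF) (C : Clause) (l : Lit) : l ∈ Γ → l ∈ C → C ∈ Δ →
      DPLL Γ (Δ.erase C) → DPLL Γ Δ
  | red (Γ : Valu) (Δ : CNF) (C : Clause) (l : Lit) : l ∈ Γ → Lit.neg l ∈ C → C ∈ Δ →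
      DPLL Γ (insert (C.erase (Lit.neg l)) (Δ.erase C)) → DPLL Γ Δ
  | split (Γ : Valu) (Δ : CNF) (l : Lit) :
      DPLL (insert l Γ) Δ → DPLL (insert (Lit.neg l) Γ) Δ → DPLL Γ Δ

/-- The sized DPLL derivability relation `Γ ⊢ⁿ Δ`. -/
inductive DPLLn : Valu → ℕ → CNF → Prop
  | conflict (Γ : Valu) (Δ : CNF) : (∅ : Clause) ∈ Δ → DPLLn Γ 0 Δ
  | unit (Γ : Valu) (Δ : CNF) (l : Lit) (n : ℕ) : ({l} : Clause) ∈ Δ →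
      DPLLn (insert l Γ) n (Δ.erase {l}) → DPLLn Γ (n + 1) Δ
  | elim (Γ : Valu) (Δ : CNF) (C : Clause) (l : Lit) (n : ℕ) : l ∈ Γ → l ∈ C → C ∈ Δ →
      DPLLn Γ n (Δ.erase C) → DPLLn Γ (n + 1) Δ
  | red (Γ : Valu) (Δ : CNF) (C : Clause) (l : Lit) (n : ℕ) : l ∈ Γ → Lit.neg l ∈ C → C ∈ Δ →
      DPLLn Γ n (insert (C.erase (Lit.neg l)) (Δ.erase C)) → DPLLn Γ (n + 1) Δ
  | split (Γ : Valu) (Δ : CNF) (l : Lit) (n m : ℕ) :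
      DPLLn (insert l Γ) n Δ → DPLLn (insert (Lit.neg l) Γ) m Δ → DPLLn Γ (n + m + 1) Δ

/-- The sized resolution derivability relation `Δ ⊢ᵣⁿ C`. -/
inductive Res : CNF → ℕ → Clause → Prop
  | sub (Δ : CNF) (C₀ C : Clause) : C₀ ∈ Δ → C₀ ⊆ C → Res Δ 0 C
  | res (Δ : CNF) (C C' : Clause) (l : Lit) (n m : ℕ) :
      Res Δ n (insert l C) → Res Δ m (insert (Lit.neg l) C') → Res Δ (n + m + 1) (C ∪ C')

/-! Soundness is induction on derivations. For completeness, split on the variables of `Δ` that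
the consistent valuation `Γ` does not yet assign. Once all are assigned, the model determined by
`Γ` falsifies some clause of `Δ`; every literal of that clause is then refuted by `Γ`, so `red`
removes them one by one down to the empty clause, a `conflict`. -/

@[simp]
lemma Lit.neg_neg (l : Lit) : l.neg.neg = l := by
  simp [Lit.neg]

lemma Lit.neg_ne (l : Lit) : l.neg ≠ l := by
  cases l
  simp [Lit.neg]

lemma Lit.eq_or_eq_neg_of_var_eq {a b : Lit} (h : a.var = b.var) : a = b ∨ a = b.neg := by
  rcases a with ⟨v, s⟩
  rcases b with ⟨w, t⟩
  cases s <;> cases t <;> simp_all [Lit.neg]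

lemma IsModel.apply_neg {M : Lit → Bool} (hM : IsModel M) (l : Lit) : M l.neg = !M l := by
  have := hM l
  revert this
  cases M l <;> cases M l.neg <;> simp

lemma SatVal.insert {M : Lit → Bool} {Γ : Valu} {l : Lit} (hΓ : SatVal M Γ) (hl : M l = true) :
    SatVal M (insert l Γ) := by
  intro x hx
  rcases Finset.mem_insert.1 hx with rfl | hx
  exacts [hl, hΓ x hx]

lemma SatVal.mono {M : Lit → Bool} {Γ Γ' : Valu} (hΓ : SatVal M Γ) (h : Γ' ⊆ Γ) : SatVal M Γ' :=
  fun l hl => hΓ l (h hl)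

lemma SatCNF.mono {M : Lit → Bool} {Δ Δ' : CNF} (hΔ : SatCNF M Δ) (h : Δ' ⊆ Δ) : SatCNF M Δ' :=
  fun C hC => hΔ C (h hC)

lemma DPLL.not_satCNF {Γ : Valu} {Δ : CNF} (h : DPLL Γ Δ) {M : Lit → Bool} (hM : IsModel M)
    (hΓ : SatVal M Γ) : ¬ SatCNF M Δ := by
  induction h with
  | conflict Γ Δ hmem =>
      intro hΔ
      obtain ⟨l, hl, -⟩ := hΔ _ hmem
      simp at hl
  | unit Γ Δ l hmem _ ih =>
      intro hΔ
      obtain ⟨l', hl', hMl'⟩ := hΔ _ hmem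
      rw [Finset.mem_singleton] at hl'
      subst hl'
      exact ih (hΓ.insert hMl') (hΔ.mono (Finset.erase_subset _ _))
  | elim Γ Δ C l _ _ _ _ ih =>
      exact fun hΔ => ih hΓ (hΔ.mono (Finset.erase_subset _ _))
  | red Γ Δ C l hlΓ _ hCΔ _ ih =>
      intro hΔ
      refine ih hΓ fun D hD => ?_
      rcases Finset.mem_insert.1 hD with rfl | hD
      · obtain ⟨l', hl', hMl'⟩ := hΔ C hCΔ
        refine ⟨l', Finset.mem_erase.2 ⟨?_, hl'⟩, hMl'⟩
        rintro rfl
        simp [hM.apply_neg, hΓ l hlΓ] at hMl'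
      · exact hΔ D (Finset.mem_of_mem_erase hD)
  | split Γ Δ l _ _ ih₁ ih₂ =>
      cases hl : M l
      · exact ih₂ (hΓ.insert (by simp [hM.apply_neg, hl]))
      · exact ih₁ (hΓ.insert hl)

lemma DPLL.of_mem_of_forall_neg_mem {Γ : Valu} {C : Clause} (hC : ∀ l ∈ C, l.neg ∈ Γ) :
    ∀ {Δ : CNF}, C ∈ Δ → DPLL Γ Δ := by
  induction C using Finset.induction_on with
  | empty => exact fun hΔ => DPLL.conflict _ _ hΔ
  | insert a s ha ih =>
      intro Δ hΔ
      refine DPLL.red Γ Δ _ a.neg (hC a (Finset.mem_insert_self _ _)) (by simp) hΔ ?_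
      rw [Lit.neg_neg, Finset.erase_insert ha]
      exact ih (fun l hl => hC l (Finset.mem_insert_of_mem hl)) (Finset.mem_insert_self _ _)

def CNF.vars (Δ : CNF) : Finset ℕ := Δ.sup fun C => C.image Lit.var

lemma CNF.var_mem_vars {Δ : CNF} {C : Clause} {l : Lit} (hC : C ∈ Δ) (hl : l ∈ C) :
    l.var ∈ Δ.vars :=
  Finset.mem_sup.2 ⟨C, hC, Finset.mem_image_of_mem _ hl⟩

def modelOf (Γ : Valu) : Lit → Bool :=
  fun l => if l ∈ Γ then true else if l.neg ∈ Γ then false else l.sign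

lemma Consistent.isModel_modelOf {Γ : Valu} (h : Consistent Γ) : IsModel (modelOf Γ) := by
  intro l
  by_cases h₁ : l ∈ Γ
  · simp [modelOf, h₁, h l h₁]
  · by_cases h₂ : l.neg ∈ Γ
    · simp [modelOf, h₁, h₂]
    · cases l
      simp_all [modelOf, Lit.neg]

lemma satVal_modelOf (Γ : Valu) : SatVal (modelOf Γ) Γ := by
  intro l hl
  simp [modelOf, hl]

lemma neg_mem_of_modelOf_eq_false {Γ : Valu} {l : Lit} (hvar : l.var ∈ Γ.image Lit.var)
    (hl : modelOf Γ l = false) : l.neg ∈ Γ := by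
  obtain ⟨g, hgΓ, hgv⟩ := Finset.mem_image.1 hvar
  rcases Lit.eq_or_eq_neg_of_var_eq hgv with rfl | rfl
  · simp [modelOf, hgΓ] at hl
  · exact hgΓ

lemma Consistent.insert {Γ : Valu} {l : Lit} (h : Consistent Γ) (hl : l.neg ∉ Γ) :
    Consistent (insert l Γ) := by
  intro x hx hnx
  rcases Finset.mem_insert.1 hx with rfl | hxΓ
  · rcases Finset.mem_insert.1 hnx with hnx | hnx
    exacts [x.neg_ne hnx, hl hnx]
  · rcases Finset.mem_insert.1 hnx with rfl | hnx
    exacts [hl (by simpa using hxΓ), h x hxΓ hnx]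

lemma DPLL.of_vars_subset {Γ : Valu} {Δ : CNF} (hvars : Δ.vars ⊆ Γ.image Lit.var)
    (hcons : Consistent Γ) (hunsat : ∀ M, IsModel M → SatVal M Γ → ¬ SatCNF M Δ) :
    DPLL Γ Δ := by
  have hfalse := hunsat _ hcons.isModel_modelOf (satVal_modelOf Γ)
  simp only [SatCNF, not_forall, not_exists, not_and, Bool.not_eq_true] at hfalse
  obtain ⟨C, hCΔ, hC⟩ := hfalse
  exact DPLL.of_mem_of_forall_neg_mem
    (fun l hl => neg_mem_of_modelOf_eq_false (hvars (CNF.var_mem_vars hCΔ hl)) (hC l hl)) hCΔ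

theorem DPLL.of_unsat {Γ : Valu} {Δ : CNF} (hcons : Consistent Γ)
    (hunsat : ∀ M, IsModel M → SatVal M Γ → ¬ SatCNF M Δ) : DPLL Γ Δ := by
  by_cases hvars : Δ.vars ⊆ Γ.image Lit.var
  · exact DPLL.of_vars_subset hvars hcons hunsat
  obtain ⟨v, hvΔ, hvΓ⟩ := Finset.not_subset.1 hvars
  have hsplit : ∀ l : Lit, l.var = v → DPLL (insert l Γ) Δ := fun l hl =>
    DPLL.of_unsat
      (hcons.insert fun hneg => hvΓ (Finset.mem_image.2 ⟨l.neg, hneg, hl⟩))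
      (fun M hM hΓ => hunsat M hM (hΓ.mono (Finset.subset_insert _ _)))
  exact DPLL.split Γ Δ ⟨v, true⟩ (hsplit _ rfl) (hsplit _ rfl)
termination_by (Δ.vars \ Γ.image Lit.var).card
decreasing_by
  rw [Finset.image_insert, hl, Finset.sdiff_insert]
  exact Finset.card_erase_lt_of_mem (Finset.mem_sdiff.2 ⟨hvΔ, hvΓ⟩)

/-- Unsatisfiability is equivalent to DPLL derivability from the empty valuation. -/
theorem dpll_unsat_iff (Δ : CNF) :
    (¬ ∃ M : Lit → Bool, IsModel M ∧ SatCNF M Δ) ↔ DPLL (∅ : Valu) Δ := by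
  constructor
  · exact fun h => DPLL.of_unsat (by simp [Consistent]) fun M hM _ hΔ => h ⟨M, hM, hΔ⟩
  · rintro h ⟨M, hM, hΔ⟩
    exact h.not_satCNF hM (by simp [SatVal]) hΔ
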